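/- arXiv:2401.15826 — 2 statements merged into one kernel-verified Lean document; each statement's English description precedes it below -/
import Mathlib

section
/- Consider a controllable discrete-time LTI system x(k+1) = A x(k) + B u(k), y(k) = C x(k) + D u(k) with state dimension ñ. Suppose a length-T input/output data trajectory (u_d, y_d) is collected and the matrix H₀ = col(H₁(x_{d,1:T−L+1}), H_L(u_d)) has full row rank, where x_d is the corresponding state trajectory. Then for every initial state x₀ ∈ ℝ^{ñ} and every input sequence u ∈ ℝ^{m̃L}, there exists g ∈ ℝ^{T−L+1} such that the length-L input/output trajectory generated from x₀ under u equals col(H_L(u_d), H_L(y_d)) g. -/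
/-!
Since `H₀` has full row rank, some `g` gives `H₀ g = col(x₀, u)`. Every column of the data
Hankel matrices is a shifted piece of the data trajectory, so by linearity `H_L(x_d) g`,
`H_L(u_d) g`, `H_L(y_d) g` again obey the state and output equations. The combined
trajectory starts at `x₀` and is driven by `u`, hence coincides with the trajectory of
the system from `x₀` under `u`.
-/

open Matrix

theorem Matrix.mulVec_surjective_of_rank_eq_card {K m n : Type*} [Field K] [Fintype m]
    [Fintype n] (M : Matrix m n K) (h : M.rank = Fintype.card m) :
    Function.Surjective M.mulVec := by
  have hrange : LinearMap.range M.mulVecLin = ⊤ :=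
    Submodule.eq_top_of_finrank_eq <| by rw [← Matrix.rank, h, Module.finrank_fintype_fun_eq_card]
  exact LinearMap.range_eq_top.mp hrange

namespace LTI

variable {R : Type*} [CommSemiring R] {N : ℕ}

/-- Block `i` of the product `H(w) g` of a Hankel matrix of `w` with `N` columns and `g`. -/
def hankelComb {V : Type*} [AddCommMonoid V] [Module R V] (w : ℕ → V) (g : Fin N → R)
    (i : ℕ) : V :=
  ∑ j : Fin N, g j • w (i + j)

theorem hankelComb_apply {ι : Type*} (w : ℕ → ι → R) (g : Fin N → R) (i : ℕ) (a : ι) :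
    hankelComb w g i a = ∑ j : Fin N, w (i + j) a * g j := by
  simp only [hankelComb, Finset.sum_apply, Pi.smul_apply, smul_eq_mul, mul_comm]

theorem mulVec_hankelComb {ι κ : Type*} [Fintype κ] (M : Matrix ι κ R) (w : ℕ → κ → R)
    (g : Fin N → R) (i : ℕ) :
    M *ᵥ hankelComb w g i = hankelComb (fun k => M *ᵥ w k) g i := by
  simp only [hankelComb, mulVec_sum, mulVec_smul]

variable {σ μ : Type*} [Fintype σ] [Fintype μ]

theorem hankelComb_succ {T : ℕ} (A : Matrix σ σ R) (B : Matrix σ μ R) {ud : ℕ → μ → R}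
    {xd : ℕ → σ → R} (hdyn : ∀ k, k + 1 < T → xd (k + 1) = A *ᵥ xd k + B *ᵥ ud k)
    (g : Fin N → R) {i : ℕ} (hi : i + N < T) :
    hankelComb xd g (i + 1) = A *ᵥ hankelComb xd g i + B *ᵥ hankelComb ud g i := by
  rw [mulVec_hankelComb, mulVec_hankelComb]
  simp only [hankelComb, ← Finset.sum_add_distrib, ← smul_add]
  refine Finset.sum_congr rfl fun j _ => ?_
  rw [add_right_comm, hdyn _ (by omega)]

theorem hankelComb_output {T : ℕ} {π : Type*} (C : Matrix π σ R) (D : Matrix π μ R)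
    {ud : ℕ → μ → R} {xd : ℕ → σ → R} {yd : ℕ → π → R}
    (hout : ∀ k, k < T → yd k = C *ᵥ xd k + D *ᵥ ud k) (g : Fin N → R) {i : ℕ}
    (hi : i + N ≤ T) :
    hankelComb yd g i = C *ᵥ hankelComb xd g i + D *ᵥ hankelComb ud g i := by
  rw [mulVec_hankelComb, mulVec_hankelComb]
  simp only [hankelComb, ← Finset.sum_add_distrib, ← smul_add]
  exact Finset.sum_congr rfl fun j _ => by rw [hout _ (by omega)]

theorem state_eq_of_input_eq (A : Matrix σ σ R) (B : Matrix σ μ R) {n : ℕ}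
    {u u' : ℕ → μ → R} {x x' : ℕ → σ → R} (h0 : x 0 = x' 0)
    (hx : ∀ k < n, x (k + 1) = A *ᵥ x k + B *ᵥ u k)
    (hx' : ∀ k < n, x' (k + 1) = A *ᵥ x' k + B *ᵥ u' k)
    (hu : ∀ k < n, u k = u' k) : ∀ k ≤ n, x k = x' k := by
  intro k hk
  induction k with
  | zero => exact h0
  | succ k ih => rw [hx k hk, hx' k hk, ih (by omega), hu k hk]

end LTI

open LTI in
theorem stmt_14_general {ns ms ps T L : ℕ} (hLT : L ≤ T)
    (A : Matrix (Fin ns) (Fin ns) ℝ) (B : Matrix (Fin ns) (Fin ms) ℝ)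
    (C : Matrix (Fin ps) (Fin ns) ℝ) (D : Matrix (Fin ps) (Fin ms) ℝ)
    (ud : ℕ → Fin ms → ℝ) (xd : ℕ → Fin ns → ℝ) (yd : ℕ → Fin ps → ℝ)
    (hdyn : ∀ k, k + 1 < T → xd (k + 1) = A.mulVec (xd k) + B.mulVec (ud k))
    (hout : ∀ k, k < T → yd k = C.mulVec (xd k) + D.mulVec (ud k))
    (hrank : (Matrix.of fun (r : Fin ns ⊕ Fin L × Fin ms) (j : Fin (T - L + 1)) =>
        Sum.elim (fun s => xd j.1 s) (fun ia => ud (ia.1.1 + j.1) ia.2) r).rank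
        = ns + L * ms) :
    ∀ (x0 : Fin ns → ℝ) (u : ℕ → Fin ms → ℝ) (x : ℕ → Fin ns → ℝ),
      x 0 = x0 → (∀ k, x (k + 1) = A.mulVec (x k) + B.mulVec (u k)) →
      ∃ g : Fin (T - L + 1) → ℝ, ∀ i < L,
        (u i = ∑ j : Fin (T - L + 1), g j • ud (i + j.1)) ∧
        (C.mulVec (x i) + D.mulVec (u i) = ∑ j : Fin (T - L + 1), g j • yd (i + j.1)) := by
  intro x0 u x hx0 hx
  obtain ⟨g, hg⟩ := Matrix.mulVec_surjective_of_rank_eq_card _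
    (hrank.trans (by simp : ns + L * ms = Fintype.card (Fin ns ⊕ Fin L × Fin ms)))
    (Sum.elim x0 fun ia : Fin L × Fin ms => u ia.1 ia.2)
  have hx0g : x 0 = hankelComb xd g 0 := by
    ext s
    simpa [hx0, hankelComb_apply, mulVec, dotProduct] using (congrFun hg (.inl s)).symm
  have hug : ∀ i < L, u i = hankelComb ud g i := fun i hi => by
    ext a
    simpa [hankelComb_apply, mulVec, dotProduct] using (congrFun hg (.inr (⟨i, hi⟩, a))).symm
  have hxg : ∀ i < L, x i = hankelComb xd g i := fun i hi =>
    state_eq_of_input_eq A B (n := L - 1) hx0g (fun k _ => hx k)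
      (fun k hk => hankelComb_succ A B hdyn g (by omega)) (fun k hk => hug k (by omega)) i
      (by omega)
  refine ⟨g, fun i hi => ⟨hug i hi, ?_⟩⟩
  rw [hxg i hi, hug i hi, ← hankelComb_output C D hout g (by omega)]
  rfl

/-- Fundamental-lemma style data-driven representation: for a controllable LTI
system, if the matrix `H₀ = col(H₁(x_d), H_L(u_d))` built from a length-`T`
data trajectory has full row rank, then every length-`L` input/output
trajectory of the system is a linear combination of the columns of the stacked
Hankel matrix `col(H_L(u_d), H_L(y_d))`. -/
theorem stmt_14 {ns ms ps T L : ℕ} (hL : 1 ≤ L) (hLT : L ≤ T)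
    (A : Matrix (Fin ns) (Fin ns) ℝ) (B : Matrix (Fin ns) (Fin ms) ℝ)
    (C : Matrix (Fin ps) (Fin ns) ℝ) (D : Matrix (Fin ps) (Fin ms) ℝ)
    (hctrb : (Matrix.of fun (i : Fin ns) (jk : Fin ns × Fin ms) =>
        (A ^ (jk.1 : ℕ) * B) i jk.2).rank = ns)
    (ud : ℕ → Fin ms → ℝ) (xd : ℕ → Fin ns → ℝ) (yd : ℕ → Fin ps → ℝ)
    (hdyn : ∀ k, k + 1 < T → xd (k + 1) = A.mulVec (xd k) + B.mulVec (ud k))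
    (hout : ∀ k, k < T → yd k = C.mulVec (xd k) + D.mulVec (ud k))
    (hrank : (Matrix.of fun (r : Fin ns ⊕ Fin L × Fin ms) (j : Fin (T - L + 1)) =>
        Sum.elim (fun s => xd j.1 s) (fun ia => ud (ia.1.1 + j.1) ia.2) r).rank
        = ns + L * ms) :
    ∀ (x0 : Fin ns → ℝ) (u : ℕ → Fin ms → ℝ) (x : ℕ → Fin ns → ℝ),
      x 0 = x0 → (∀ k, x (k + 1) = A.mulVec (x k) + B.mulVec (u k)) →
      ∃ g : Fin (T - L + 1) → ℝ, ∀ i < L,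
        (u i = ∑ j : Fin (T - L + 1), g j • ud (i + j.1)) ∧
        (C.mulVec (x i) + D.mulVec (u i) = ∑ j : Fin (T - L + 1), g j • yd (i + j.1)) :=
  stmt_14_general hLT A B C D ud xd yd hdyn hout hrank
end

section
/- Let T_L and O_L be as in the LTI trajectory structure, and suppose H₀ = col(H₁(x_{d,1:T−L+1}), H_L(u_d)) has full row rank ñ + m̃L. Then the column space of the stacked Hankel matrix col(H_L(u_d), H_L(y_d)) equals the column space of the matrix [[I_{m̃L}, 0],[T_L, O_L]], i.e., the span of the pre-collected trajectory columns is exactly the set of all length-L trajectories of the system. -/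
/-!
Each column of `col(H_L(u_d), H_L(y_d))` is a length-`L` window of the recorded trajectory, so
unrolling the state equation expresses it as `[[I, 0], [T_L, O_L]]` applied to the corresponding
column of `col(H_L(u_d), H₁(x_d))`. That right factor is `H₀` with its block rows swapped, so by
the rank hypothesis it is surjective, and the range of the product is the range of the left factor.
-/

open Matrix Finset

theorem Finset.sum_range_ite_lt {M : Type*} [AddCommMonoid M] {i L : ℕ} (hi : i < L)
    (X Y : ℕ → M) :
    ∑ b ∈ range L, (if b < i then X b else if i = b then Y b else 0) =
      ∑ b ∈ range i, X b + Y i := by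
  rw [← sum_subset (range_subset_range.mpr hi) fun b _ hb => ?_, sum_range_succ,
    if_neg (lt_irrefl i), if_pos rfl]
  · exact congrArg (· + Y i) (sum_congr rfl fun b hb => if_pos (mem_range.mp hb))
  · have : i < b := by simpa using hb
    rw [if_neg (by omega), if_neg (by omega)]

namespace Matrix

theorem of_sumElim_eq_fromRows {R m₁ m₂ n : Type*} (f : m₁ → n → R) (g : m₂ → n → R) :
    (of fun r j => Sum.elim (fun i => f i j) (fun i => g i j) r) = fromRows (of f) (of g) := by
  ext (_ | _) _ <;> rfl

theorem of_sumElim_sumElim_eq_fromBlocks {R m₁ m₂ n₁ n₂ : Type*} (a : m₁ → n₁ → R)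
    (b : m₁ → n₂ → R) (c : m₂ → n₁ → R) (d : m₂ → n₂ → R) :
    (of fun r k => Sum.elim (fun i => Sum.elim (fun j => a i j) (fun j => b i j) k)
      (fun i => Sum.elim (fun j => c i j) (fun j => d i j) k) r) =
      fromBlocks (of a) (of b) (of c) (of d) := by
  ext (_ | _) (_ | _) <;> rfl

variable {K : Type*} {l m n : Type*} [Fintype m] [Fintype n]

theorem rank_fromRows_comm [CommSemiring K] {m₁ m₂ : Type*} (A₁ : Matrix m₁ n K)
    (A₂ : Matrix m₂ n K) : (fromRows A₁ A₂).rank = (fromRows A₂ A₁).rank := by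
  rw [← rank_submatrix (fromRows A₂ A₁) (Equiv.sumComm m₁ m₂) (Equiv.refl n)]
  congr 1
  ext (i | i) j <;> rfl

variable [Field K]

theorem range_mulVecLin_eq_top_of_rank_eq_card (A : Matrix m n K)
    (hA : A.rank = Fintype.card m) : LinearMap.range A.mulVecLin = ⊤ :=
  Submodule.eq_top_of_finrank_eq (hA.trans (Module.finrank_fintype_fun_eq_card K).symm)

theorem range_mulVecLin_mul_of_rank_eq_card (M : Matrix l m K) (N : Matrix m n K)
    (hN : N.rank = Fintype.card m) :
    LinearMap.range (M * N).mulVecLin = LinearMap.range M.mulVecLin := by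
  rw [mulVecLin_mul]
  exact LinearMap.range_comp_of_range_eq_top _ (range_mulVecLin_eq_top_of_rank_eq_card N hN)

end Matrix

namespace LTI

variable {R : Type*} [Semiring R] {n m p : Type*} [Fintype n] [Fintype m] [DecidableEq n]

def hankel {ι : Type*} (w : ℕ → ι → R) (L N : ℕ) : Matrix (Fin L × ι) (Fin N) R :=
  of fun ia j => w (ia.1 + j) ia.2

def stateMatrix (x : ℕ → n → R) (N : ℕ) : Matrix n (Fin N) R :=
  of fun s j => x j s

def toeplitz (A : Matrix n n R) (B : Matrix n m R) (C : Matrix p n R) (D : Matrix p m R)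
    (L : ℕ) : Matrix (Fin L × p) (Fin L × m) R :=
  of fun ip jb =>
    if (jb.1 : ℕ) < ip.1 then (C * A ^ ((ip.1 : ℕ) - jb.1 - 1) * B) ip.2 jb.2
    else if (ip.1 : ℕ) = jb.1 then D ip.2 jb.2 else 0

def observability (A : Matrix n n R) (C : Matrix p n R) (L : ℕ) : Matrix (Fin L × p) n R :=
  of fun ip s => (C * A ^ (ip.1 : ℕ)) ip.2 s

variable {A : Matrix n n R} {B : Matrix n m R} {C : Matrix p n R} {D : Matrix p m R}

theorem state_eq {u : ℕ → m → R} {x : ℕ → n → R} {T : ℕ}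
    (hdyn : ∀ k, k + 1 < T → x (k + 1) = A *ᵥ x k + B *ᵥ u k) {i j : ℕ} (hij : i + j < T) :
    x (i + j) = A ^ i *ᵥ x j + ∑ b ∈ range i, (A ^ (i - b - 1) * B) *ᵥ u (b + j) := by
  induction i with
  | zero => simp
  | succ i ih =>
    rw [Nat.succ_add, hdyn _ (by omega), ih (by omega), mulVec_add, mulVec_mulVec, ← pow_succ',
      mulVec_sum, sum_range_succ, Nat.add_sub_cancel_left, Nat.sub_self, pow_zero,
      Matrix.one_mul, add_assoc]
    congr 2
    refine sum_congr rfl fun b hb => ?_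
    rw [mulVec_mulVec, ← Matrix.mul_assoc, ← pow_succ',
      show i - b - 1 + 1 = i + 1 - b - 1 by have := mem_range.mp hb; omega]

theorem output_eq {u : ℕ → m → R} {x : ℕ → n → R} {y : ℕ → p → R} {T : ℕ}
    (hdyn : ∀ k, k + 1 < T → x (k + 1) = A *ᵥ x k + B *ᵥ u k)
    (hout : ∀ k, k < T → y k = C *ᵥ x k + D *ᵥ u k) {i j : ℕ} (hij : i + j < T) :
    y (i + j) = (C * A ^ i) *ᵥ x j
      + ∑ b ∈ range i, (C * A ^ (i - b - 1) * B) *ᵥ u (b + j) + D *ᵥ u (i + j) := by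
  simp only [hout _ hij, state_eq hdyn hij, mulVec_add, mulVec_sum, mulVec_mulVec,
    Matrix.mul_assoc]

theorem toeplitz_mul_hankel_apply (u : ℕ → m → R) {L N : ℕ} (i : Fin L) (q : p) (j : Fin N) :
    (toeplitz A B C D L * hankel u L N) (i, q) j =
      (∑ b ∈ range i, (C * A ^ ((i : ℕ) - b - 1) * B) *ᵥ u (b + j) + D *ᵥ u (i + j)) q := by
  let g : ℕ → p → R := fun b =>
    if b < (i : ℕ) then (C * A ^ ((i : ℕ) - b - 1) * B) *ᵥ u (b + j)
    else if (i : ℕ) = b then D *ᵥ u (b + j) else 0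
  have hblock : ∀ b : Fin L,
      ∑ a, toeplitz A B C D L (i, q) (b, a) * hankel u L N (b, a) j = g b q := by
    intro b
    simp only [g, toeplitz, hankel, of_apply]
    split_ifs <;> simp [mulVec, dotProduct]
  rw [mul_apply, Fintype.sum_prod_type, sum_congr rfl fun b _ => hblock b, ← Finset.sum_apply,
    Fin.sum_univ_eq_sum_range g]
  exact congrFun (sum_range_ite_lt i.isLt _ _) q

theorem observability_mul_stateMatrix_apply (x : ℕ → n → R) {L N : ℕ} (i : Fin L) (q : p)
    (j : Fin N) :
    (observability A C L * stateMatrix x N) (i, q) j = ((C * A ^ (i : ℕ)) *ᵥ x j) q :=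
  rfl

theorem hankel_output_eq {u : ℕ → m → R} {x : ℕ → n → R} {y : ℕ → p → R} {T L N : ℕ}
    (hdyn : ∀ k, k + 1 < T → x (k + 1) = A *ᵥ x k + B *ᵥ u k)
    (hout : ∀ k, k < T → y k = C *ᵥ x k + D *ᵥ u k) (hLN : L + N ≤ T + 1) :
    hankel y L N = toeplitz A B C D L * hankel u L N + observability A C L * stateMatrix x N := by
  ext ⟨i, q⟩ j
  rw [Matrix.add_apply, toeplitz_mul_hankel_apply, observability_mul_stateMatrix_apply, hankel,
    of_apply, output_eq hdyn hout (by omega)]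
  simp only [Pi.add_apply]
  abel

theorem fromRows_hankel_eq_fromBlocks_mul [DecidableEq m] {u : ℕ → m → R} {x : ℕ → n → R}
    {y : ℕ → p → R} {T L N : ℕ} (hdyn : ∀ k, k + 1 < T → x (k + 1) = A *ᵥ x k + B *ᵥ u k)
    (hout : ∀ k, k < T → y k = C *ᵥ x k + D *ᵥ u k) (hLN : L + N ≤ T + 1) :
    fromRows (hankel u L N) (hankel y L N) =
      fromBlocks 1 0 (toeplitz A B C D L) (observability A C L) *
        fromRows (hankel u L N) (stateMatrix x N) := by
  rw [fromBlocks_mul_fromRows, Matrix.one_mul, Matrix.zero_mul, add_zero,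
    hankel_output_eq hdyn hout hLN]

end LTI

theorem stmt_15_general {ns ms ps T L : ℕ} (hLT : L ≤ T)
    (A : Matrix (Fin ns) (Fin ns) ℝ) (B : Matrix (Fin ns) (Fin ms) ℝ)
    (C : Matrix (Fin ps) (Fin ns) ℝ) (D : Matrix (Fin ps) (Fin ms) ℝ)
    (ud : ℕ → Fin ms → ℝ) (xd : ℕ → Fin ns → ℝ) (yd : ℕ → Fin ps → ℝ)
    (hdyn : ∀ k, k + 1 < T → xd (k + 1) = A.mulVec (xd k) + B.mulVec (ud k))
    (hout : ∀ k, k < T → yd k = C.mulVec (xd k) + D.mulVec (ud k))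
    (hrank : (Matrix.of fun (r : Fin ns ⊕ Fin L × Fin ms) (j : Fin (T - L + 1)) =>
        Sum.elim (fun s => xd j.1 s) (fun ia => ud (ia.1.1 + j.1) ia.2) r).rank
        = ns + L * ms) :
    LinearMap.range (Matrix.mulVecLin (Matrix.of fun
        (r : Fin L × Fin ms ⊕ Fin L × Fin ps) (j : Fin (T - L + 1)) =>
        Sum.elim (fun ia => ud (ia.1.1 + j.1) ia.2)
          (fun ip => yd (ip.1.1 + j.1) ip.2) r)) =
    LinearMap.range (Matrix.mulVecLin (Matrix.of fun
        (r : Fin L × Fin ms ⊕ Fin L × Fin ps) (c : Fin L × Fin ms ⊕ Fin ns) =>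
        Sum.elim
          (fun ia => Sum.elim
            (fun jb : Fin L × Fin ms => if ia = jb then (1 : ℝ) else 0)
            (fun _ : Fin ns => (0 : ℝ)) c)
          (fun ip => Sum.elim
            (fun jb : Fin L × Fin ms =>
              if (jb.1 : ℕ) < (ip.1 : ℕ) then
                (C * A ^ ((ip.1 : ℕ) - (jb.1 : ℕ) - 1) * B) ip.2 jb.2
              else if (ip.1 : ℕ) = (jb.1 : ℕ) then D ip.2 jb.2 else 0)
            (fun s : Fin ns => (C * A ^ (ip.1 : ℕ)) ip.2 s) c) r)) := by
  set N := T - L + 1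
  rw [of_sumElim_eq_fromRows] at hrank
  rw [of_sumElim_eq_fromRows, of_sumElim_sumElim_eq_fromBlocks]
  have hfull : (fromRows (LTI.hankel ud L N) (LTI.stateMatrix xd N)).rank =
      Fintype.card (Fin L × Fin ms ⊕ Fin ns) := by
    rw [rank_fromRows_comm]
    simp only [Fintype.card_sum, Fintype.card_prod, Fintype.card_fin, Nat.add_comm]
    exact hrank
  change LinearMap.range (fromRows (LTI.hankel ud L N) (LTI.hankel yd L N)).mulVecLin =
    LinearMap.range (fromBlocks 1 0 (LTI.toeplitz A B C D L) (LTI.observability A C L)).mulVecLin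
  rw [LTI.fromRows_hankel_eq_fromBlocks_mul hdyn hout (by omega),
    range_mulVecLin_mul_of_rank_eq_card _ _ hfull]

/-- Under full row rank of `H₀`, the column space of the stacked Hankel matrix
`col(H_L(u_d), H_L(y_d))` equals the column space of the block matrix
`[[I, 0], [T_L, O_L]]`, i.e., the span of the pre-collected trajectory columns
is exactly the set of all length-`L` trajectories of the system. -/
theorem stmt_15 {ns ms ps T L : ℕ} (hL : 1 ≤ L) (hLT : L ≤ T)
    (A : Matrix (Fin ns) (Fin ns) ℝ) (B : Matrix (Fin ns) (Fin ms) ℝ)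
    (C : Matrix (Fin ps) (Fin ns) ℝ) (D : Matrix (Fin ps) (Fin ms) ℝ)
    (ud : ℕ → Fin ms → ℝ) (xd : ℕ → Fin ns → ℝ) (yd : ℕ → Fin ps → ℝ)
    (hdyn : ∀ k, k + 1 < T → xd (k + 1) = A.mulVec (xd k) + B.mulVec (ud k))
    (hout : ∀ k, k < T → yd k = C.mulVec (xd k) + D.mulVec (ud k))
    (hrank : (Matrix.of fun (r : Fin ns ⊕ Fin L × Fin ms) (j : Fin (T - L + 1)) =>
        Sum.elim (fun s => xd j.1 s) (fun ia => ud (ia.1.1 + j.1) ia.2) r).rank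
        = ns + L * ms) :
    LinearMap.range (Matrix.mulVecLin (Matrix.of fun
        (r : Fin L × Fin ms ⊕ Fin L × Fin ps) (j : Fin (T - L + 1)) =>
        Sum.elim (fun ia => ud (ia.1.1 + j.1) ia.2)
          (fun ip => yd (ip.1.1 + j.1) ip.2) r)) =
    LinearMap.range (Matrix.mulVecLin (Matrix.of fun
        (r : Fin L × Fin ms ⊕ Fin L × Fin ps) (c : Fin L × Fin ms ⊕ Fin ns) =>
        Sum.elim
          (fun ia => Sum.elim
            (fun jb : Fin L × Fin ms => if ia = jb then (1 : ℝ) else 0)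
            (fun _ : Fin ns => (0 : ℝ)) c)
          (fun ip => Sum.elim
            (fun jb : Fin L × Fin ms =>
              if (jb.1 : ℕ) < (ip.1 : ℕ) then
                (C * A ^ ((ip.1 : ℕ) - (jb.1 : ℕ) - 1) * B) ip.2 jb.2
              else if (ip.1 : ℕ) = (jb.1 : ℕ) then D ip.2 jb.2 else 0)
            (fun s : Fin ns => (C * A ^ (ip.1 : ℕ)) ip.2 s) c) r)) :=
  stmt_15_general hLT A B C D ud xd yd hdyn hout hrank
end
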